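/- arXiv:2301.11352 — 2 statements merged into one kernel-verified Lean document; each statement's English description precedes it below -/
import Mathlib

section
/- Let $r>1$. Then there is a constant $C_r>0$ such that for every integer $k\ge 2$, $\sum_{q\in\mathbb{N},\ q\nmid Q_k} q^{-r}\le C_r\,k^{-r+1}(\log k)^{-1}$, where $Q_k=\mathrm{lcm}\{q\in\mathbb{N}:1\le q\le k\}$. -/
open scoped BigOperators ENNReal

noncomputable section

/-- `Q_k = lcm{1,2,…,k}`. -/
def Qlcm (k : ℕ) : ℕ := (Finset.Icc 1 k).lcm id

/-!
Since `v_p(Q_k) = ⌊log_p k⌋`, a positive `q ∤ Q_k` is divisible by `s_p = p ^ (⌊log_p k⌋ + 1)`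
for some prime `p`, so the sum is at most `ζ(r) ∑_p s_p^{-r}`. As `s_p ≥ max(p, k)`, giving each
prime the least `j` with `p ≤ 2^(j+1) k` yields `s_p ≥ 2^j k`, so by Chebyshev's bound the primes
with a given `j` contribute at most `π(2^(j+1) k) (2^j k)^{-r} ≪ 2^((1-r) j) k^(1-r) / log k`,
a geometric series in `j` because `r > 1`.
-/

open Real (log)
open scoped Nat.Prime

theorem Qlcm_eq_lcmUpto : Qlcm = Nat.lcmUpto := rfl

namespace Nat

theorem exists_prime_pow_dvd_of_not_dvd_lcmUpto {k q : ℕ} (hq : q ≠ 0)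
    (h : ¬ q ∣ lcmUpto k) : ∃ p, p.Prime ∧ p ^ (p.log k + 1) ∣ q := by
  contrapose! h
  rw [← factorization_le_iff_dvd hq (lcmUpto_ne_zero k)]
  intro p
  by_cases hp : p.Prime
  · have := h p hp
    rw [hp.pow_dvd_iff_le_factorization hq] at this
    rw [factorization_lcmUpto k hp]
    omega
  · simp [factorization_eq_zero_of_not_prime _ hp]

end Nat

namespace Chebyshev

theorem primeCounting_mul_log_le (n : ℕ) :
    (π n : ℝ) * log n ≤ (2 * log 4 + 2) * n := by
  rcases lt_or_ge n 2 with hn | hn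
  · have : log n = 0 := by interval_cases n <;> simp
    rw [this, mul_zero]
    positivity
  have hn' : (1 : ℝ) < n := by exact_mod_cast hn
  have hlog : 0 < log n := Real.log_pos hn'
  have hsqrt : √(n : ℝ) * log n ≤ 2 * n := by
    have := Real.log_le_sub_one_of_pos (Real.sqrt_pos.2 (by linarith : (0:ℝ) < n))
    rw [Real.log_sqrt (by positivity)] at this
    nlinarith [Real.mul_self_sqrt (by positivity : (0:ℝ) ≤ n), Real.sqrt_nonneg (n : ℝ)]
  have := pi_le_log4_mul_div hn'
  rw [Nat.floor_natCast, Real.log_sqrt (by positivity)] at this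
  calc (π n : ℝ) * log n ≤ (log 4 * n / (log n / 2) + √(n : ℝ)) * log n := by gcongr
    _ = 2 * log 4 * n + √(n : ℝ) * log n := by field_simp
    _ ≤ _ := by linarith

end Chebyshev

theorem tsum_ite_dvd {α : Type*} [AddCommMonoid α] [TopologicalSpace α] {d : ℕ} (hd : d ≠ 0)
    (f : ℕ → α) : ∑' n, (if d ∣ n then f n else 0) = ∑' m, f (d * m) := by
  rw [← (mul_right_injective₀ hd).tsum_eq]
  · simp
  · intro n hn
    by_contra h
    exact hn (if_neg fun ⟨m, hm⟩ => h ⟨m, hm.symm⟩)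

theorem tsum_ite_prime_le {α : Type*} [AddCommMonoid α] [TopologicalSpace α] (N : ℕ) (c : α) :
    ∑' p : ℕ, (if p ≤ N ∧ p.Prime then c else 0) = π N • c := by
  simp_rw [← Nat.mem_primesLE]
  rw [tsum_eq_sum (s := Nat.primesLE N) fun p hp => if_neg hp, Finset.sum_ite_mem,
    Finset.inter_self, Finset.sum_const, Nat.primesLE_card_eq_primeCounting]

namespace ENNReal

theorem rpow_neg_le_rpow_neg {x y : ℝ≥0∞} (h : x ≤ y) {r : ℝ} (hr : 0 ≤ r) :
    y ^ (-r) ≤ x ^ (-r) := by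
  rw [rpow_neg, rpow_neg]
  gcongr

theorem natCast_rpow_eq_ofReal {n : ℕ} (hn : n ≠ 0) (r : ℝ) :
    (n : ℝ≥0∞) ^ r = ENNReal.ofReal ((n : ℝ) ^ r) := by
  rw [← ofReal_natCast, ofReal_rpow_of_pos (by positivity)]

theorem tsum_ite_one_le_natCast_rpow_neg_eq_ofReal {r : ℝ} (hr : 1 < r) :
    (∑' m : ℕ, if 1 ≤ m then (m : ℝ≥0∞) ^ (-r) else 0) =
      ENNReal.ofReal (∑' m : ℕ, (m : ℝ) ^ (-r)) := by
  rw [ofReal_tsum_of_nonneg (fun m => by positivity) (Real.summable_nat_rpow.2 (by linarith))]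
  refine tsum_congr fun m => ?_
  split_ifs with hm
  · exact natCast_rpow_eq_ofReal (by omega) _
  · simp [show m = 0 by omega, Real.zero_rpow (by linarith : -r ≠ 0)]

theorem tsum_ite_dvd_natCast_rpow_neg {d : ℕ} (hd : d ≠ 0) (r : ℝ) :
    (∑' n : ℕ, if d ∣ n then (if 1 ≤ n then (n : ℝ≥0∞) ^ (-r) else 0) else 0) =
      (d : ℝ≥0∞) ^ (-r) * ∑' m : ℕ, if 1 ≤ m then (m : ℝ≥0∞) ^ (-r) else 0 := by
  rw [tsum_ite_dvd hd, ← ENNReal.tsum_mul_left]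
  refine tsum_congr fun m => ?_
  have : 1 ≤ d * m ↔ 1 ≤ m := by
    simp only [Nat.one_le_iff_ne_zero, ne_eq, mul_eq_zero, hd, false_or]
  rw [mul_ite, mul_zero, Nat.cast_mul, mul_rpow_of_ne_top (natCast_ne_top d) (natCast_ne_top m)]
  exact if_congr this rfl rfl

end ENNReal

theorem tsum_nondvd_lcmUpto_le (r : ℝ) (k : ℕ) :
    (∑' q : ℕ, if 1 ≤ q ∧ ¬ q ∣ Nat.lcmUpto k then (q : ℝ≥0∞) ^ (-r) else 0) ≤
      (∑' p : ℕ, if p.Prime then ((p ^ (p.log k + 1) : ℕ) : ℝ≥0∞) ^ (-r) else 0) *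
        ∑' m : ℕ, if 1 ≤ m then (m : ℝ≥0∞) ^ (-r) else 0 := by
  calc _ ≤ ∑' q : ℕ, ∑' p : ℕ, if p.Prime then
          (if p ^ (p.log k + 1) ∣ q then (if 1 ≤ q then (q : ℝ≥0∞) ^ (-r) else 0) else 0)
          else 0 := by
        refine ENNReal.tsum_le_tsum fun q => ?_
        by_cases hq : 1 ≤ q ∧ ¬ q ∣ Nat.lcmUpto k
        · obtain ⟨p, hp, hdvd⟩ := Nat.exists_prime_pow_dvd_of_not_dvd_lcmUpto (by omega) hq.2
          refine le_of_eq_of_le ?_ (ENNReal.le_tsum p)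
          simp [hq, hp, hdvd]
        · rw [if_neg hq]
          exact zero_le
    _ = ∑' p : ℕ, ∑' q : ℕ, if p.Prime then
          (if p ^ (p.log k + 1) ∣ q then (if 1 ≤ q then (q : ℝ≥0∞) ^ (-r) else 0) else 0)
          else 0 := ENNReal.tsum_comm
    _ = _ := by
        rw [← ENNReal.tsum_mul_right]
        refine tsum_congr fun p => ?_
        split_ifs with hp
        · exact ENNReal.tsum_ite_dvd_natCast_rpow_neg (pow_ne_zero _ hp.ne_zero) r
        · simp

theorem exists_le_two_pow_succ_mul_and_two_pow_mul_le {k : ℕ} (hk : k ≠ 0) (n : ℕ) :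
    ∃ j, n ≤ 2 ^ (j + 1) * k ∧ 2 ^ j * k ≤ max n k := by
  have hex : ∃ j, n ≤ 2 ^ (j + 1) * k :=
    ⟨n, (Nat.lt_two_pow_self.trans (Nat.pow_lt_pow_right (by norm_num) n.lt_succ_self)).le.trans
      (Nat.le_mul_of_pos_right _ (Nat.pos_of_ne_zero hk))⟩
  refine ⟨Nat.find hex, Nat.find_spec hex, ?_⟩
  rcases h : Nat.find hex with _ | j
  · simp
  · have := Nat.find_min hex (show j < Nat.find hex by omega)
    omega

theorem pow_log_succ_rpow_neg_le {p k : ℕ} (hp : 1 < p) (hk : k ≠ 0) {r : ℝ}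
    (hr : 0 ≤ r) : ((p ^ (p.log k + 1) : ℕ) : ℝ≥0∞) ^ (-r) ≤
      ∑' j : ℕ, if p ≤ 2 ^ (j + 1) * k then ((2 ^ j * k : ℕ) : ℝ≥0∞) ^ (-r) else 0 := by
  obtain ⟨j, hpj, hjk⟩ := exists_le_two_pow_succ_mul_and_two_pow_mul_le hk p
  have hle : 2 ^ j * k ≤ p ^ (p.log k + 1) := by
    refine hjk.trans (max_le ?_ (Nat.lt_pow_succ_log_self hp k).le)
    exact Nat.le_self_pow (by omega) p
  refine le_trans ?_ (ENNReal.le_tsum j)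
  rw [if_pos hpj]
  exact ENNReal.rpow_neg_le_rpow_neg (by exact_mod_cast hle) hr

theorem primeCounting_two_pow_succ_mul_le {k : ℕ} (hk : 2 ≤ k) (r : ℝ) (j : ℕ) :
    (π (2 ^ (j + 1) * k) : ℝ) * ((2 ^ j * k : ℕ) : ℝ) ^ (-r) ≤
      2 * (2 * log 4 + 2) * ((2 : ℝ) ^ (1 - r)) ^ j * ((k : ℝ) ^ (1 - r) / log k) := by
  set M : ℝ := 2 ^ j * k with hM_def
  have hk0 : (0 : ℝ) < k := by positivity
  have hlogk : 0 < log k := Real.log_pos (by exact_mod_cast hk)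
  have hM : 0 < M := by positivity
  have hN : ((2 ^ (j + 1) * k : ℕ) : ℝ) = 2 * M := by push_cast; ring
  have hπ : (π (2 ^ (j + 1) * k) : ℝ) ≤ (2 * log 4 + 2) * (2 * M) / log k := by
    rw [le_div_iff₀ hlogk, ← hN]
    refine le_trans ?_ (Chebyshev.primeCounting_mul_log_le _)
    gcongr
    exact Nat.le_mul_of_pos_left _ (by positivity)
  calc (π (2 ^ (j + 1) * k) : ℝ) * ((2 ^ j * k : ℕ) : ℝ) ^ (-r)
      ≤ (2 * log 4 + 2) * (2 * M) / log k * M ^ (-r) := by push_cast; gcongr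
    _ = 2 * (2 * log 4 + 2) * M ^ (1 - r) / log k := by
        rw [sub_eq_add_neg, Real.rpow_add hM, Real.rpow_one]; ring
    _ = _ := by
        rw [hM_def, Real.mul_rpow (by positivity) hk0.le, Real.rpow_pow_comm zero_le_two]; ring

theorem tsum_prime_pow_log_succ_rpow_neg_le {r : ℝ} (hr : 1 < r) {k : ℕ} (hk : 2 ≤ k) :
    (∑' p : ℕ, if p.Prime then ((p ^ (p.log k + 1) : ℕ) : ℝ≥0∞) ^ (-r) else 0) ≤
      ENNReal.ofReal (2 * (2 * log 4 + 2) / (1 - 2 ^ (1 - r)) * ((k : ℝ) ^ (1 - r) / log k)) := by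
  set w : ℝ := 2 ^ (1 - r)
  have hw0 : 0 ≤ w := by positivity
  have hw1 : w < 1 := Real.rpow_lt_one_of_one_lt_of_neg one_lt_two (by linarith)
  set a : ℝ := 2 * (2 * log 4 + 2) * ((k : ℝ) ^ (1 - r) / log k)
  have ha : 0 ≤ a := by
    have : 0 ≤ log (k : ℝ) := Real.log_natCast_nonneg k
    positivity
  calc _ ≤ ∑' p : ℕ, ∑' j : ℕ, if p ≤ 2 ^ (j + 1) * k ∧ p.Prime
          then ((2 ^ j * k : ℕ) : ℝ≥0∞) ^ (-r) else 0 := by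
        refine ENNReal.tsum_le_tsum fun p => ?_
        split_ifs with hp
        · simpa [hp] using pow_log_succ_rpow_neg_le hp.one_lt (by omega) (by linarith : 0 ≤ r)
        · exact zero_le
    _ = ∑' j : ℕ, (π (2 ^ (j + 1) * k) : ℝ≥0∞) * ((2 ^ j * k : ℕ) : ℝ≥0∞) ^ (-r) := by
        rw [ENNReal.tsum_comm]
        simp only [tsum_ite_prime_le, nsmul_eq_mul]
    _ ≤ ∑' j : ℕ, ENNReal.ofReal (a * w ^ j) := by
        refine ENNReal.tsum_le_tsum fun j => ?_
        rw [ENNReal.natCast_rpow_eq_ofReal (by positivity), ← ENNReal.ofReal_natCast,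
          ← ENNReal.ofReal_mul (by positivity)]
        refine ENNReal.ofReal_le_ofReal ((primeCounting_two_pow_succ_mul_le hk r j).trans_eq ?_)
        ring
    _ = ENNReal.ofReal (a / (1 - w)) := by
        rw [← ENNReal.ofReal_tsum_of_nonneg (fun j => by positivity)
          ((summable_geometric_of_lt_one hw0 hw1).mul_left a), tsum_mul_left,
          tsum_geometric_of_lt_one hw0 hw1, div_eq_mul_inv]
    _ = _ := by rw [div_mul_eq_mul_div, mul_div_right_comm]

/-- **Lemma 2**: for `r > 1` there is a constant `C_r > 0` such that for every `k ≥ 2`,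
`∑_{q ∤ Q_k} q^{-r} ≤ C_r k^{-r+1} (log k)⁻¹`, the sum running over positive integers
`q` not dividing `Q_k`. -/
theorem sum_over_nondivisors (r : ℝ) (hr : 1 < r) :
    ∃ C : ℝ, 0 < C ∧ ∀ k : ℕ, 2 ≤ k →
      (∑' q : ℕ, if 1 ≤ q ∧ ¬ q ∣ Qlcm k then ((q : ℝ≥0∞)) ^ (-r) else 0)
        ≤ ENNReal.ofReal (C * (k : ℝ) ^ (-r + 1) / Real.log k) := by
  rw [Qlcm_eq_lcmUpto]
  set A : ℝ := 2 * (2 * log 4 + 2) / (1 - 2 ^ (1 - r))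
  set Z : ℝ := ∑' m : ℕ, (m : ℝ) ^ (-r)
  have hA : 0 < A := div_pos (by positivity)
    (sub_pos.2 (Real.rpow_lt_one_of_one_lt_of_neg one_lt_two (by linarith)))
  have hZ : 1 ≤ Z := by
    simpa using (Real.summable_nat_rpow.2 (by linarith : -r < -1)).le_tsum 1
      (fun m _ => by positivity)
  refine ⟨A * Z, by positivity, fun k hk => ?_⟩
  have hx : 0 ≤ (k : ℝ) ^ (1 - r) / log k := by
    have := Real.log_natCast_nonneg k
    positivity
  calc _ ≤ _ := tsum_nondvd_lcmUpto_le r k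
    _ ≤ ENNReal.ofReal (A * ((k : ℝ) ^ (1 - r) / log k)) * ENNReal.ofReal Z := by
        rw [ENNReal.tsum_ite_one_le_natCast_rpow_neg_eq_ofReal hr]
        gcongr
        exact tsum_prime_pow_log_succ_rpow_neg_le hr hk
    _ = _ := by
        rw [← ENNReal.ofReal_mul (by positivity), neg_add_eq_sub]
        congr 1
        ring
end
end

section
/- Let $d\ge 1$, $k\in\mathbb{N}$, $1\le j\le\log_2(k)-2$, and set $\varepsilon=2^{-2k}$. Suppose $q\in\mathbb{N}$ divides $q_j$ and $\tau\in\mathbb{R}$ with $|\tau|\le 2^{j/2}\varepsilon$. Then for every $\alpha\in\mathbb{R}^d$, with $\ell_0\in\mathbb{Z}^d$ a nearest lattice point to $q\alpha$, there exist constants $C,c>0$ (depending only on $d$) such that $\sum_{\ell\in\mathbb{Z}^d,\ \ell\ne\ell_0}e^{-\frac{\pi}{2}|\alpha-\ell/q|^2/(\varepsilon+\varepsilon^{-1}|\tau|^2)}\ \le\ C\,2^{-c\,2^{k}}$. -/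
open scoped BigOperators Real

noncomputable section

/-- `q_j = lcm{1,2,…,2^j}`. -/
def qlcm (j : ℕ) : ℕ := (Finset.Icc 1 (2 ^ j)).lcm id

section auxnat

lemma qlcm_pos (j : ℕ) : 0 < qlcm j := by
  rw [qlcm, Nat.pos_iff_ne_zero, Ne, Finset.lcm_eq_zero_iff]
  rintro ⟨x, hx, hx0⟩
  simp only [Finset.mem_coe, Finset.mem_Icc, id] at hx hx0
  omega

lemma prime_dvd_centralBinom {p m e : ℕ} (hp : p.Prime) (hm : 1 ≤ m) (he : 1 ≤ e)
    (h1 : m < p ^ e) (h2 : p ^ e ≤ 2 * m) : p ∣ Nat.centralBinom m := by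
  have hb : Nat.log p (2 * m) < e + 1 :=
    Nat.log_lt_of_lt_pow (by omega) (by
      calc 2 * m < 2 * p ^ e := by omega
      _ ≤ p * p ^ e := by
        have := hp.two_le; exact Nat.mul_le_mul_right _ this
      _ = p ^ (e + 1) := by ring)
  have hkn : m ≤ 2 * m := by omega
  have hmul := Nat.Prime.emultiplicity_choose (p := p) (n := 2 * m) (k := m) (b := e + 1) hp hkn hb
  have hmem : e ∈ Finset.filter (fun i => p ^ i ≤ m % p ^ i + (2 * m - m) % p ^ i)
      (Finset.Ico 1 (e + 1)) := by
    rw [Finset.mem_filter, Finset.mem_Ico]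
    refine ⟨⟨he, by omega⟩, ?_⟩
    have : m % p ^ e = m := Nat.mod_eq_of_lt h1
    rw [Nat.two_mul, Nat.add_sub_cancel, this]
    omega
  have hcard : 1 ≤ (Finset.filter (fun i => p ^ i ≤ m % p ^ i + (2 * m - m) % p ^ i)
      (Finset.Ico 1 (e + 1))).card := Finset.card_pos.mpr ⟨e, hmem⟩
  have : (1 : ℕ∞) ≤ emultiplicity p ((2 * m).choose m) := by
    rw [hmul]; exact_mod_cast hcard
  have := pow_dvd_iff_le_emultiplicity.mpr this
  simpa [Nat.centralBinom] using this

lemma lcm_two_mul_dvd (m : ℕ) (hm : 1 ≤ m) :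
    (Finset.Icc 1 (2 * m)).lcm id ∣ (Finset.Icc 1 m).lcm id * Nat.centralBinom m := by
  apply Finset.lcm_dvd
  intro x hx
  rw [Finset.mem_Icc] at hx
  obtain ⟨hx1, hx2⟩ := hx
  have hx0 : x ≠ 0 := by omega
  have hL0 : (Finset.Icc 1 m).lcm id ≠ 0 := by
    rw [Ne, Finset.lcm_eq_zero_iff]
    rintro ⟨y, hy, hy0⟩
    simp only [Finset.mem_coe, Finset.mem_Icc, id] at hy hy0; omega
  have hR0 : (Finset.Icc 1 m).lcm id * Nat.centralBinom m ≠ 0 :=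
    Nat.mul_ne_zero hL0 (Nat.centralBinom_pos m).ne'
  show x ∣ _
  rw [← Nat.factorization_le_iff_dvd hx0 hR0, Finsupp.le_def]
  intro p
  by_cases hp : p.Prime
  · set e := x.factorization p with hedef
    rcases Nat.eq_zero_or_pos e with he | he
    · simp [← hedef, he]
    have hpe : p ^ e ∣ x := Nat.ordProj_dvd x p
    have hpex : p ^ e ≤ x := Nat.le_of_dvd (by omega) hpe
    rw [Nat.factorization_mul hL0 (Nat.centralBinom_pos m).ne']
    simp only [Finsupp.coe_add, Pi.add_apply, ← hedef]
    by_cases hcase : p ^ e ≤ m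
    · have : p ^ e ∣ (Finset.Icc 1 m).lcm id := by
        have hmem : p ^ e ∈ Finset.Icc 1 m := Finset.mem_Icc.mpr ⟨Nat.one_le_pow _ _ hp.pos, hcase⟩
        simpa using Finset.dvd_lcm (f := id) hmem
      have := (Nat.Prime.pow_dvd_iff_le_factorization hp hL0).mp this
      omega
    · push_neg at hcase
      have hdvd : p ∣ Nat.centralBinom m := prime_dvd_centralBinom hp hm he hcase (by omega)
      have h1 : 1 ≤ (Nat.centralBinom m).factorization p :=
        (Nat.Prime.pow_dvd_iff_le_factorization hp
          (Nat.centralBinom_pos m).ne').mp (by simpa using hdvd)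
      have hpe1 : p ^ (e - 1) ≤ m := by
        have hp2 := hp.two_le
        have : p * p ^ (e - 1) = p ^ e := by
          rw [← pow_succ']
          congr 1; omega
        nlinarith [Nat.one_le_pow (e-1) p hp.pos]
      have : p ^ (e - 1) ∣ (Finset.Icc 1 m).lcm id := by
        have hmem : p ^ (e - 1) ∈ Finset.Icc 1 m :=
          Finset.mem_Icc.mpr ⟨Nat.one_le_pow _ _ hp.pos, hpe1⟩
        simpa using Finset.dvd_lcm (f := id) hmem
      have := (Nat.Prime.pow_dvd_iff_le_factorization hp hL0).mp this
      omega
  · simp [Nat.factorization_eq_zero_of_not_prime _ hp]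

lemma centralBinom_sq_bound : ∀ m : ℕ, (Nat.centralBinom m) ^ 2 * (3 * m + 1) ≤ 16 ^ m := by
  intro m
  induction m with
  | zero => simp [Nat.centralBinom]
  | succ n ih =>
    have h := Nat.succ_mul_centralBinom_succ n
    have h2 : ((n + 1) * Nat.centralBinom (n + 1)) ^ 2
        = (2 * (2 * n + 1) * Nat.centralBinom n) ^ 2 := by rw [h]
    have hpos : 0 < (n + 1) ^ 2 * (3 * n + 1) := by positivity
    refine Nat.le_of_mul_le_mul_left ?_ hpos
    have hpoly : (2 * n + 1) ^ 2 * (3 * (n + 1) + 1) ≤ 4 * (n + 1) ^ 2 * (3 * n + 1) := by nlinarith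
    calc (n + 1) ^ 2 * (3 * n + 1) * (Nat.centralBinom (n + 1) ^ 2 * (3 * (n + 1) + 1))
        = ((n + 1) * Nat.centralBinom (n + 1)) ^ 2 * ((3 * n + 1) * (3 * (n + 1) + 1)) := by ring
      _ = (2 * (2 * n + 1) * Nat.centralBinom n) ^ 2
            * ((3 * n + 1) * (3 * (n + 1) + 1)) := by rw [h2]
      _ = 4 * ((2 * n + 1) ^ 2 * (3 * (n + 1) + 1)) * (Nat.centralBinom n ^ 2 * (3 * n + 1)) := by
            ring
      _ ≤ 4 * (4 * (n + 1) ^ 2 * (3 * n + 1)) * 16 ^ n :=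
            Nat.mul_le_mul (Nat.mul_le_mul_left _ hpoly) ih
      _ = (n + 1) ^ 2 * (3 * n + 1) * 16 ^ (n + 1) := by ring

lemma qlcm_sq_bound : ∀ j : ℕ, (qlcm j) ^ 2 * 4 ^ (j + 1) ≤ 16 ^ (2 ^ j) := by
  intro j
  induction j with
  | zero =>
    have : qlcm 0 = 1 := by simp [qlcm]
    simp [this]
  | succ n ih =>
    have hdvd : qlcm (n + 1) ∣ qlcm n * Nat.centralBinom (2 ^ n) := by
      have h2 : 2 ^ (n + 1) = 2 * 2 ^ n := by ring
      rw [qlcm, h2]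
      exact lcm_two_mul_dvd (2 ^ n) (Nat.one_le_two_pow)
    have hle : qlcm (n + 1) ≤ qlcm n * Nat.centralBinom (2 ^ n) :=
      Nat.le_of_dvd (Nat.mul_pos (qlcm_pos n) (Nat.centralBinom_pos _)) hdvd
    have hCB : Nat.centralBinom (2 ^ n) ^ 2 * 4 ≤ 16 ^ (2 ^ n) := by
      have h1 := centralBinom_sq_bound (2 ^ n)
      have h4 : 4 ≤ 3 * 2 ^ n + 1 := by
        have : 1 ≤ 2 ^ n := Nat.one_le_two_pow
        omega
      calc Nat.centralBinom (2 ^ n) ^ 2 * 4 ≤ Nat.centralBinom (2 ^ n) ^ 2 * (3 * 2 ^ n + 1) :=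
            Nat.mul_le_mul_left _ h4
        _ ≤ 16 ^ (2 ^ n) := h1
    calc qlcm (n + 1) ^ 2 * 4 ^ (n + 2)
        ≤ (qlcm n * Nat.centralBinom (2 ^ n)) ^ 2 * 4 ^ (n + 2) :=
          Nat.mul_le_mul_right _ (Nat.pow_le_pow_left hle 2)
      _ = (qlcm n ^ 2 * 4 ^ (n + 1)) * (Nat.centralBinom (2 ^ n) ^ 2 * 4) := by ring
      _ ≤ 16 ^ (2 ^ n) * 16 ^ (2 ^ n) := Nat.mul_le_mul ih hCB
      _ = 16 ^ (2 ^ (n + 1)) := by rw [← pow_add]; congr 1; ring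

lemma q_sq_bound {j q k : ℕ} (hq : q ∣ qlcm j) (hk : 4 * 2 ^ j ≤ k) :
    q ^ 2 * (2 ^ j + 1) ≤ 2 ^ k := by
  have hqle : q ≤ qlcm j := Nat.le_of_dvd (qlcm_pos j) hq
  have h1 : 2 ^ j + 1 ≤ 4 ^ (j + 1) := by
    calc 2 ^ j + 1 ≤ 2 ^ j + 2 ^ j := by
          have : 1 ≤ 2 ^ j := Nat.one_le_two_pow
          omega
      _ = 2 ^ (j + 1) := by ring
      _ ≤ 4 ^ (j + 1) := Nat.pow_le_pow_left (by norm_num) _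
  calc q ^ 2 * (2 ^ j + 1) ≤ qlcm j ^ 2 * 4 ^ (j + 1) :=
        Nat.mul_le_mul (Nat.pow_le_pow_left hqle 2) h1
    _ ≤ 16 ^ (2 ^ j) := qlcm_sq_bound j
    _ = 2 ^ (4 * 2 ^ j) := by rw [pow_mul]; norm_num
    _ ≤ 2 ^ k := Nat.pow_le_pow_right (by norm_num) hk

end auxnat

section auxsum

lemma summable_exp_neg_int_sq : Summable (fun n : ℤ => Real.exp (-(n : ℝ) ^ 2)) := by
  have hnat : Summable (fun n : ℕ => Real.exp (-(n : ℝ))) := by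
    have : (fun n : ℕ => Real.exp (-(n : ℝ))) = fun n : ℕ => (Real.exp (-1)) ^ n := by
      funext n
      rw [← Real.exp_nat_mul]
      norm_num
    rw [this]
    exact summable_geometric_of_lt_one (le_of_lt (Real.exp_pos _)) (by
      rw [Real.exp_lt_one_iff]; norm_num)
  have key : ∀ n : ℕ, Real.exp (-((n : ℝ)) ^ 2) ≤ Real.exp (-(n : ℝ)) := by
    intro n
    apply Real.exp_le_exp.mpr
    have : (n : ℝ) ≤ (n : ℝ) ^ 2 := by
      exact_mod_cast Nat.le_self_pow (by norm_num) n
    linarith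
  apply Summable.of_nat_of_neg
  · apply Summable.of_nonneg_of_le (fun n => (Real.exp_pos _).le) _ hnat
    intro n; exact_mod_cast key n
  · apply Summable.of_nonneg_of_le (fun n => (Real.exp_pos _).le) _ hnat
    intro n
    rw [show ((-(n:ℤ) : ℤ) : ℝ) = -(n:ℝ) by push_cast; ring]
    calc Real.exp (-(-(n:ℝ)) ^ 2) = Real.exp (-(n:ℝ)^2) := by ring_nf
      _ ≤ Real.exp (-(n:ℝ)) := key n

lemma summable_pi_prod (d : ℕ) (f : ℤ → ℝ) (hf : Summable f) (h0 : ∀ n, 0 ≤ f n) :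
    Summable (fun ℓ : Fin d → ℤ => ∏ i, f (ℓ i)) := by
  induction d with
  | zero => exact summable_of_finite_support (Set.Finite.subset (Set.finite_univ) (by simp))
  | succ n ih =>
    rw [← (Fin.consEquiv (fun _ : Fin (n+1) => ℤ)).summable_iff]
    have hs : Summable (fun p : ℤ × (Fin n → ℤ) => f p.1 * ∏ i : Fin n, f (p.2 i)) :=
      Summable.mul_of_nonneg (f := f) (g := fun y : Fin n → ℤ => ∏ i, f (y i)) hf ih
        (fun m => h0 m) (fun y => Finset.prod_nonneg fun i _ => h0 _)
    refine hs.congr fun p => ?_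
    have he : ((Fin.consEquiv (fun _ : Fin (n+1) => ℤ)) p : Fin (n+1) → ℤ)
        = Fin.cons p.1 p.2 := rfl
    rw [Function.comp_apply, he, Fin.prod_univ_succ]
    simp

lemma summable_gauss_shift (d : ℕ) (ℓ₀ : Fin d → ℤ) :
    Summable (fun v : Fin d → ℤ => ∏ i, Real.exp (-((v i : ℝ) - (ℓ₀ i : ℝ)) ^ 2)) := by
  have hbase : Summable (fun w : Fin d → ℤ => ∏ i, Real.exp (-((w i : ℝ)) ^ 2)) :=
    summable_pi_prod d (fun n : ℤ => Real.exp (-(n : ℝ) ^ 2)) summable_exp_neg_int_sq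
      (fun n => (Real.exp_pos _).le)
  have := (Equiv.subRight ℓ₀).summable_iff.mpr hbase
  refine this.congr fun v => ?_
  refine Finset.prod_congr rfl fun i _ => ?_
  congr 1
  have : ((Equiv.subRight ℓ₀) v : Fin d → ℤ) i = v i - ℓ₀ i := rfl
  rw [this]
  push_cast
  ring

lemma tsum_gauss_shift (d : ℕ) (ℓ₀ : Fin d → ℤ) :
    ∑' v : Fin d → ℤ, ∏ i, Real.exp (-((v i : ℝ) - (ℓ₀ i : ℝ)) ^ 2)
      = ∑' w : Fin d → ℤ, ∏ i, Real.exp (-((w i : ℝ)) ^ 2) := by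
  rw [← (Equiv.subRight ℓ₀).tsum_eq (fun w : Fin d → ℤ => ∏ i, Real.exp (-((w i : ℝ)) ^ 2))]
  refine tsum_congr fun v => ?_
  refine Finset.prod_congr rfl fun i _ => ?_
  congr 1
  have : ((Equiv.subRight ℓ₀) v : Fin d → ℤ) i = v i - ℓ₀ i := rfl
  rw [this]
  push_cast
  ring

end auxsum

lemma per_term_bound (d q k : ℕ) (hq1 : 1 ≤ q) (α : Fin d → ℝ) (ℓ ℓ₀ : Fin d → ℤ)
    (hℓ : ℓ ≠ ℓ₀) (Dv B : ℝ) (hD : 0 < Dv) (hB1 : 1 ≤ B) (hBdef : B = π / 8 * 2 ^ k)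
    (hq2D : (q : ℝ) ^ 2 * Dv ≤ ((2 : ℝ) ^ k)⁻¹)
    (hnear : (∑ i, ((q : ℝ) * α i - (ℓ₀ i : ℝ)) ^ 2) ≤ ∑ i, ((q : ℝ) * α i - (ℓ i : ℝ)) ^ 2) :
    Real.exp (-(π / 2) * (∑ i, (α i - (ℓ i : ℝ) / q) ^ 2) / Dv)
      ≤ Real.exp (1 - B) * ∏ i, Real.exp (-((ℓ i : ℝ) - (ℓ₀ i : ℝ)) ^ 2) := by
  have hqR : (0 : ℝ) < (q : ℝ) := by exact_mod_cast hq1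
  have hM1 : 1 ≤ ∑ i, ((ℓ i : ℝ) - (ℓ₀ i : ℝ)) ^ 2 := by
    obtain ⟨i, hi⟩ := Function.ne_iff.mp hℓ
    have hz : ℓ i - ℓ₀ i ≠ 0 := sub_ne_zero.mpr hi
    have hz1 : (1 : ℤ) ≤ (ℓ i - ℓ₀ i) ^ 2 := by
      rcases lt_or_gt_of_ne hz with h | h <;> nlinarith
    have hz2 : (1 : ℝ) ≤ ((ℓ i : ℝ) - (ℓ₀ i : ℝ)) ^ 2 := by
      have hc : (((ℓ i - ℓ₀ i) ^ 2 : ℤ) : ℝ) = ((ℓ i : ℝ) - (ℓ₀ i : ℝ)) ^ 2 := by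
        push_cast; ring
      rw [← hc]
      exact_mod_cast hz1
    calc (1 : ℝ) ≤ ((ℓ i : ℝ) - (ℓ₀ i : ℝ)) ^ 2 := hz2
      _ ≤ ∑ i, ((ℓ i : ℝ) - (ℓ₀ i : ℝ)) ^ 2 :=
          Finset.single_le_sum (f := fun i => ((ℓ i : ℝ) - (ℓ₀ i : ℝ)) ^ 2)
            (fun i _ => sq_nonneg _) (Finset.mem_univ i)
  have hMS : (∑ i, ((ℓ i : ℝ) - (ℓ₀ i : ℝ)) ^ 2)
      ≤ 4 * ∑ i, ((q : ℝ) * α i - (ℓ i : ℝ)) ^ 2 := by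
    have hsum : (∑ i, ((ℓ i : ℝ) - (ℓ₀ i : ℝ)) ^ 2)
        ≤ ∑ i, (2 * ((q : ℝ) * α i - (ℓ₀ i : ℝ)) ^ 2
          + 2 * ((q : ℝ) * α i - (ℓ i : ℝ)) ^ 2) := by
      refine Finset.sum_le_sum fun i _ => ?_
      nlinarith [sq_nonneg (((q : ℝ) * α i - (ℓ₀ i : ℝ)) + ((q : ℝ) * α i - (ℓ i : ℝ)))]
    have hsplit : (∑ i, (2 * ((q : ℝ) * α i - (ℓ₀ i : ℝ)) ^ 2
        + 2 * ((q : ℝ) * α i - (ℓ i : ℝ)) ^ 2))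
        = 2 * (∑ i, ((q : ℝ) * α i - (ℓ₀ i : ℝ)) ^ 2)
          + 2 * ∑ i, ((q : ℝ) * α i - (ℓ i : ℝ)) ^ 2 := by
      rw [Finset.sum_add_distrib, ← Finset.mul_sum, ← Finset.mul_sum]
    linarith [hsum.trans_eq hsplit]
  have hSval : (∑ i, (α i - (ℓ i : ℝ) / q) ^ 2)
      = (∑ i, ((q : ℝ) * α i - (ℓ i : ℝ)) ^ 2) / (q : ℝ) ^ 2 := by
    rw [Finset.sum_div]
    refine Finset.sum_congr rfl fun i _ => ?_
    field_simp
  have hSqnn : 0 ≤ ∑ i, ((q : ℝ) * α i - (ℓ i : ℝ)) ^ 2 :=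
    Finset.sum_nonneg fun i _ => sq_nonneg _
  have hkey : B * (∑ i, ((ℓ i : ℝ) - (ℓ₀ i : ℝ)) ^ 2)
      ≤ π / 2 * (∑ i, ((q : ℝ) * α i - (ℓ i : ℝ)) ^ 2) / ((q : ℝ) ^ 2 * Dv) := by
    set M : ℝ := ∑ i, ((ℓ i : ℝ) - (ℓ₀ i : ℝ)) ^ 2
    set Sq : ℝ := ∑ i, ((q : ℝ) * α i - (ℓ i : ℝ)) ^ 2
    rw [le_div_iff₀ (by positivity)]
    have hM0 : (0 : ℝ) ≤ M := by linarith
    have hB0 : (0 : ℝ) ≤ B := by linarith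
    have e1 : B * M * ((q : ℝ) ^ 2 * Dv) ≤ B * M * ((2 : ℝ) ^ k)⁻¹ :=
      mul_le_mul_of_nonneg_left hq2D (by positivity)
    have e2 : B * M * ((2 : ℝ) ^ k)⁻¹ = π / 8 * M := by
      rw [hBdef]
      field_simp
    have e3 : π / 8 * M ≤ π / 2 * Sq := by
      have hπ := Real.pi_pos
      nlinarith
    linarith
  have hexp_arg : -(π / 2) * (∑ i, (α i - (ℓ i : ℝ) / q) ^ 2) / Dv
      ≤ (1 - B) + (-(∑ i, ((ℓ i : ℝ) - (ℓ₀ i : ℝ)) ^ 2)) := by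
    set M : ℝ := ∑ i, ((ℓ i : ℝ) - (ℓ₀ i : ℝ)) ^ 2
    set Sq : ℝ := ∑ i, ((q : ℝ) * α i - (ℓ i : ℝ)) ^ 2
    have harg : -(π / 2) * (∑ i, (α i - (ℓ i : ℝ) / q) ^ 2) / Dv
        = -(π / 2 * Sq / ((q : ℝ) ^ 2 * Dv)) := by
      rw [hSval, ← mul_div_assoc, div_div, neg_mul, neg_div]
    rw [harg]
    have hBM : B + M - 1 ≤ B * M := by nlinarith
    linarith [hkey]
  have hgval : Real.exp (-(∑ i, ((ℓ i : ℝ) - (ℓ₀ i : ℝ)) ^ 2))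
      = ∏ i, Real.exp (-((ℓ i : ℝ) - (ℓ₀ i : ℝ)) ^ 2) := by
    rw [← Finset.sum_neg_distrib]
    exact Real.exp_sum Finset.univ _
  calc Real.exp (-(π / 2) * (∑ i, (α i - (ℓ i : ℝ) / q) ^ 2) / Dv)
      ≤ Real.exp ((1 - B) + (-(∑ i, ((ℓ i : ℝ) - (ℓ₀ i : ℝ)) ^ 2))) :=
        Real.exp_le_exp.mpr hexp_arg
    _ = Real.exp (1 - B) * Real.exp (-(∑ i, ((ℓ i : ℝ) - (ℓ₀ i : ℝ)) ^ 2)) := Real.exp_add _ _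
    _ = _ := by rw [hgval]

/-- **Estimate (not)**: if `q ∣ q_j` and `|τ| ≤ 2^{j/2} ε`, then for any `α ∈ ℝ^d` and
`ℓ₀` a nearest lattice point to `qα`,
`∑_{ℓ ≠ ℓ₀} e^{-π/2 |α-ℓ/q|²/(ε+ε⁻¹τ²)} ≤ C 2^{-c 2^k}`. -/
theorem gaussian_tail_estimate (d : ℕ) (hd : 1 ≤ d) :
    ∃ C c : ℝ, 0 < C ∧ 0 < c ∧
      ∀ (k j q : ℕ) (τ : ℝ) (α : Fin d → ℝ) (ℓ₀ : Fin d → ℤ),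
        1 ≤ j → (j : ℝ) ≤ Real.logb 2 (k : ℝ) - 2 →
        1 ≤ q → q ∣ qlcm j →
        |τ| ≤ (2 : ℝ) ^ ((j : ℝ) / 2) * ((2 : ℝ) ^ (2 * k))⁻¹ →
        (∀ ℓ : Fin d → ℤ, (∑ i, ((q : ℝ) * α i - (ℓ₀ i : ℝ)) ^ 2)
            ≤ ∑ i, ((q : ℝ) * α i - (ℓ i : ℝ)) ^ 2) →
        (∑' ℓ : {ℓ : Fin d → ℤ // ℓ ≠ ℓ₀},
            Real.exp (-(π / 2) * (∑ i, (α i - ((ℓ : Fin d → ℤ) i : ℝ) / q) ^ 2) /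
              (((2 : ℝ) ^ (2 * k))⁻¹ + ((2 : ℝ) ^ (2 * k)) * τ ^ 2)))
          ≤ C * (2 : ℝ) ^ (-(c * 2 ^ k)) := by
  classical
  set Sd : ℝ := ∑' w : Fin d → ℤ, ∏ i, Real.exp (-((w i : ℝ)) ^ 2) with hSd
  have hSd_sum : Summable (fun w : Fin d → ℤ => ∏ i, Real.exp (-((w i : ℝ)) ^ 2)) :=
    summable_pi_prod d (fun n : ℤ => Real.exp (-(n : ℝ) ^ 2)) summable_exp_neg_int_sq
      (fun n => (Real.exp_pos _).le)
  have hSd_pos : 0 < Sd := by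
    have h00 : (∏ i : Fin d, Real.exp (-(((fun _ : Fin d => (0:ℤ)) i : ℝ)) ^ 2)) = 1 := by
      simp
    have hle := Summable.le_tsum hSd_sum (fun _ : Fin d => (0:ℤ))
      (fun w _ => Finset.prod_nonneg fun i _ => (Real.exp_pos _).le)
    rw [h00] at hle
    linarith
  refine ⟨Real.exp 1 * Sd, 1/2, by positivity, by norm_num, ?_⟩
  intro k j q τ α ℓ₀ hj hjk hq1 hqd hτ hnear
  have hk0 : k ≠ 0 := by
    rintro rfl
    simp only [Nat.cast_zero, Real.logb_zero] at hjk
    have : (1 : ℝ) ≤ (j : ℝ) := by exact_mod_cast hj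
    linarith
  have hknat : 2 ^ (j + 2) ≤ k := by
    have hlogb : (j : ℝ) + 2 ≤ Real.logb 2 (k : ℝ) := by linarith
    have hkpos : (0 : ℝ) < (k : ℝ) := by
      have : 1 ≤ k := Nat.one_le_iff_ne_zero.mpr hk0
      exact_mod_cast this
    have h1 : (2 : ℝ) ^ ((j : ℝ) + 2) ≤ (2 : ℝ) ^ (Real.logb 2 (k : ℝ)) :=
      Real.rpow_le_rpow_of_exponent_le (by norm_num) hlogb
    rw [Real.rpow_logb (by norm_num) (by norm_num) hkpos] at h1
    have h2 : (2 : ℝ) ^ ((j : ℝ) + 2) = ((2 ^ (j + 2) : ℕ) : ℝ) := by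
      rw [show ((j : ℝ) + 2) = ((j + 2 : ℕ) : ℝ) by push_cast; ring, Real.rpow_natCast]
      push_cast
      ring
    rw [h2] at h1
    exact_mod_cast h1
  have hk8 : 8 ≤ k := le_trans (by
    calc 8 = 2 ^ 3 := by norm_num
    _ ≤ 2 ^ (j + 2) := Nat.pow_le_pow_right (by norm_num) (by omega)) hknat
  have hqk : q ^ 2 * (2 ^ j + 1) ≤ 2 ^ k := q_sq_bound hqd (by
    have : 4 * 2 ^ j = 2 ^ (j + 2) := by ring
    omega)
  set ε : ℝ := ((2 : ℝ) ^ (2 * k))⁻¹ with hεdef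
  set Dv : ℝ := ε + ((2 : ℝ) ^ (2 * k)) * τ ^ 2 with hDdef
  have hε : 0 < ε := by positivity
  have hD : 0 < Dv := by positivity
  have hτ2 : τ ^ 2 ≤ (2 : ℝ) ^ j * ε ^ 2 := by
    have h1 : |τ| ^ 2 ≤ ((2 : ℝ) ^ ((j : ℝ) / 2) * ε) ^ 2 := by
      have h0 : (0 : ℝ) ≤ |τ| := abs_nonneg τ
      nlinarith [hτ]
    have h2 : ((2 : ℝ) ^ ((j : ℝ) / 2)) ^ 2 = (2 : ℝ) ^ j := by
      rw [← Real.rpow_natCast ((2:ℝ) ^ ((j:ℝ)/2)) 2, ← Real.rpow_mul (by norm_num)]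
      rw [show (j : ℝ) / 2 * ((2 : ℕ) : ℝ) = (j : ℝ) by push_cast; ring]
      rw [Real.rpow_natCast]
    calc τ ^ 2 = |τ| ^ 2 := (sq_abs τ).symm
      _ ≤ ((2 : ℝ) ^ ((j : ℝ) / 2) * ε) ^ 2 := h1
      _ = (2 : ℝ) ^ j * ε ^ 2 := by rw [mul_pow, h2]
  have hεmul : (2 : ℝ) ^ (2 * k) * ε = 1 := by
    rw [hεdef]
    field_simp
  have hDle : Dv ≤ ((2 : ℝ) ^ j + 1) * ε := by
    have h1 : ((2 : ℝ) ^ (2 * k)) * τ ^ 2 ≤ ((2 : ℝ) ^ (2 * k)) * ((2 : ℝ) ^ j * ε ^ 2) :=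
      mul_le_mul_of_nonneg_left hτ2 (by positivity)
    have h2 : ((2 : ℝ) ^ (2 * k)) * ((2 : ℝ) ^ j * ε ^ 2) = (2 : ℝ) ^ j * ε := by
      calc ((2 : ℝ) ^ (2 * k)) * ((2 : ℝ) ^ j * ε ^ 2)
          = (2 : ℝ) ^ j * (((2 : ℝ) ^ (2 * k)) * ε) * ε := by ring
        _ = (2 : ℝ) ^ j * ε := by rw [hεmul]; ring
    rw [hDdef]
    calc ε + ((2 : ℝ) ^ (2 * k)) * τ ^ 2 ≤ ε + (2 : ℝ) ^ j * ε := by linarith [h1.trans_eq h2]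
      _ = ((2 : ℝ) ^ j + 1) * ε := by ring
  have hqkR : (q : ℝ) ^ 2 * ((2 : ℝ) ^ j + 1) ≤ (2 : ℝ) ^ k := by
    have h1 : ((q ^ 2 * (2 ^ j + 1) : ℕ) : ℝ) ≤ ((2 ^ k : ℕ) : ℝ) := by exact_mod_cast hqk
    push_cast at h1
    exact h1
  have hq2D : (q : ℝ) ^ 2 * Dv ≤ ((2 : ℝ) ^ k)⁻¹ := by
    have hqpos : (0 : ℝ) < (q : ℝ) ^ 2 := by
      have : (1 : ℝ) ≤ (q : ℝ) := by exact_mod_cast hq1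
      positivity
    have h1 : (q : ℝ) ^ 2 * Dv ≤ (q : ℝ) ^ 2 * (((2 : ℝ) ^ j + 1) * ε) :=
      mul_le_mul_of_nonneg_left hDle (le_of_lt hqpos)
    have h2 : (q : ℝ) ^ 2 * (((2 : ℝ) ^ j + 1) * ε) ≤ (2 : ℝ) ^ k * ε := by
      have := mul_le_mul_of_nonneg_right hqkR (le_of_lt hε)
      calc (q : ℝ) ^ 2 * (((2 : ℝ) ^ j + 1) * ε)
          = ((q : ℝ) ^ 2 * ((2 : ℝ) ^ j + 1)) * ε := by ring
        _ ≤ (2 : ℝ) ^ k * ε := this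
    have h3 : (2 : ℝ) ^ k * ε = ((2 : ℝ) ^ k)⁻¹ := by
      rw [hεdef, two_mul, pow_add]
      field_simp
    exact (h1.trans h2).trans_eq h3
  set B : ℝ := π / 8 * 2 ^ k with hBdef
  have h2k : (256 : ℝ) ≤ (2 : ℝ) ^ k := by
    calc (256 : ℝ) = 2 ^ 8 := by norm_num
      _ ≤ (2 : ℝ) ^ k := by
        apply pow_le_pow_right₀ (by norm_num) hk8
  have hB1 : 1 ≤ B := by
    have hπ := Real.pi_gt_three
    rw [hBdef]
    nlinarith
  have hg_nonneg : ∀ v : Fin d → ℤ, 0 ≤ ∏ i, Real.exp (-((v i : ℝ) - (ℓ₀ i : ℝ)) ^ 2) :=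
    fun v => Finset.prod_nonneg fun i _ => (Real.exp_pos _).le
  have hg_sum : Summable (fun v : Fin d → ℤ => ∏ i, Real.exp (-((v i : ℝ) - (ℓ₀ i : ℝ)) ^ 2)) :=
    summable_gauss_shift d ℓ₀
  have hterm : ∀ ℓ : {ℓ : Fin d → ℤ // ℓ ≠ ℓ₀},
      Real.exp (-(π / 2) * (∑ i, (α i - ((ℓ : Fin d → ℤ) i : ℝ) / q) ^ 2) / Dv)
        ≤ Real.exp (1 - B) * ∏ i, Real.exp (-(((ℓ : Fin d → ℤ) i : ℝ) - (ℓ₀ i : ℝ)) ^ 2) := by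
    rintro ⟨ℓ, hℓ⟩
    exact per_term_bound d q k hq1 α ℓ ℓ₀ hℓ Dv B hD hB1 hBdef hq2D (hnear ℓ)
  have hsum_rhs : Summable (fun ℓ : {ℓ : Fin d → ℤ // ℓ ≠ ℓ₀} =>
      Real.exp (1 - B) * ∏ i, Real.exp (-(((ℓ : Fin d → ℤ) i : ℝ) - (ℓ₀ i : ℝ)) ^ 2)) := by
    apply Summable.mul_left
    exact (hg_sum.subtype _)
  have hsum_lhs : Summable (fun ℓ : {ℓ : Fin d → ℤ // ℓ ≠ ℓ₀} =>
      Real.exp (-(π / 2) * (∑ i, (α i - ((ℓ : Fin d → ℤ) i : ℝ) / q) ^ 2) / Dv)) :=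
    Summable.of_nonneg_of_le (fun ℓ => (Real.exp_pos _).le) hterm hsum_rhs
  have hfinal : Real.exp (1 - B) ≤ Real.exp 1 * (2 : ℝ) ^ (-((1:ℝ)/2 * 2 ^ k)) := by
    rw [Real.rpow_def_of_pos (by norm_num : (0:ℝ) < 2)]
    rw [← Real.exp_add]
    apply Real.exp_le_exp.mpr
    have hlog2 : Real.log 2 < 0.6931471808 := Real.log_two_lt_d9
    have hlog2pos : 0 < Real.log 2 := Real.log_pos (by norm_num)
    have hπ := Real.pi_gt_three
    have h2kpos : (0:ℝ) < (2:ℝ) ^ k := by positivity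
    rw [hBdef]
    nlinarith
  calc (∑' ℓ : {ℓ : Fin d → ℤ // ℓ ≠ ℓ₀},
          Real.exp (-(π / 2) * (∑ i, (α i - ((ℓ : Fin d → ℤ) i : ℝ) / q) ^ 2) / Dv))
      ≤ ∑' ℓ : {ℓ : Fin d → ℤ // ℓ ≠ ℓ₀},
          Real.exp (1 - B) * ∏ i, Real.exp (-(((ℓ : Fin d → ℤ) i : ℝ) - (ℓ₀ i : ℝ)) ^ 2) :=
        Summable.tsum_le_tsum hterm hsum_lhs hsum_rhs
    _ = Real.exp (1 - B) * ∑' ℓ : {ℓ : Fin d → ℤ // ℓ ≠ ℓ₀},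
          ∏ i, Real.exp (-(((ℓ : Fin d → ℤ) i : ℝ) - (ℓ₀ i : ℝ)) ^ 2) := tsum_mul_left
    _ ≤ Real.exp (1 - B) * Sd := by
        apply mul_le_mul_of_nonneg_left _ (Real.exp_pos _).le
        have hle : (∑' ℓ : {ℓ : Fin d → ℤ // ℓ ≠ ℓ₀},
            ∏ i, Real.exp (-(((ℓ : Fin d → ℤ) i : ℝ) - (ℓ₀ i : ℝ)) ^ 2))
            ≤ ∑' v : Fin d → ℤ, ∏ i, Real.exp (-((v i : ℝ) - (ℓ₀ i : ℝ)) ^ 2) :=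
          Summable.tsum_subtype_le (fun v : Fin d → ℤ => ∏ i, Real.exp (-((v i : ℝ) - (ℓ₀ i : ℝ)) ^ 2))
            _ hg_nonneg hg_sum
        calc _ ≤ ∑' v : Fin d → ℤ, ∏ i, Real.exp (-((v i : ℝ) - (ℓ₀ i : ℝ)) ^ 2) := hle
          _ = Sd := tsum_gauss_shift d ℓ₀
    _ ≤ (Real.exp 1 * Sd) * (2 : ℝ) ^ (-((1:ℝ)/2 * 2 ^ k)) := by
        calc Real.exp (1 - B) * Sd
            ≤ (Real.exp 1 * (2 : ℝ) ^ (-((1:ℝ)/2 * 2 ^ k))) * Sd :=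
              mul_le_mul_of_nonneg_right hfinal (le_of_lt hSd_pos)
          _ = (Real.exp 1 * Sd) * (2 : ℝ) ^ (-((1:ℝ)/2 * 2 ^ k)) := by ring
end
end
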